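/- arXiv:1610.09830 — 4 statements merged into one kernel-verified Lean document; each statement's English description precedes it below -/
import Mathlib

section
/- Let q be an odd prime, and suppose N = t^2 + N'·q^n is a perfect square Y^2 with t, Y, N' ≥ 1, t^2 ≤ q−1, N' ≤ q−1 and n ≥ 1 (i.e., the case M = 0 of the three-digit equation). Then n = 1 and Y = q − t with N' = q − 2t; in particular there are no such solutions with n ≥ 2. -/
/-- The case `M = 0`: if `Y² = t² + N'·qⁿ` with `q` an odd prime, `t² < q`,
`0 < N' < q` and `n ≥ 1`, then `n = 1`, `Y = q - t` and `N' = q - 2t`. -/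
theorem three_digit_squares_M_zero (q : ℕ) (hq : Nat.Prime q) (hodd : Odd q)
    (t Y N' : ℤ) (n : ℕ)
    (ht : 1 ≤ t) (hY : 1 ≤ Y) (hN : 1 ≤ N')
    (ht2 : t ^ 2 ≤ (q : ℤ) - 1) (hNq : N' ≤ (q : ℤ) - 1) (hn : 1 ≤ n)
    (heq : Y ^ 2 = t ^ 2 + N' * (q : ℤ) ^ n) :
    n = 1 ∧ Y = (q : ℤ) - t ∧ N' = (q : ℤ) - 2 * t := by
  -- q ≥ 3
  have hq3 : 3 ≤ q := by
    rcases hq.eq_two_or_odd with h | h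
    · subst h; exact absurd hodd (by decide)
    · have := hq.two_le; omega
  have hq3' : (3 : ℤ) ≤ (q : ℤ) := by exact_mod_cast hq3
  have hqpos : (0 : ℤ) < (q : ℤ) := by linarith
  have hprime : Prime ((q : ℤ)) := Nat.prime_iff_prime_int.mp hq
  -- t < q
  have htt : t ≤ t ^ 2 := by nlinarith
  have htq : t < (q : ℤ) := by linarith
  have hqt : ¬ (q : ℤ) ∣ t := fun h => absurd (Int.le_of_dvd (by linarith) h) (by linarith)
  have hqn_pos : (0 : ℤ) < (q : ℤ) ^ n := pow_pos hqpos n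
  have hqn_ge : (q : ℤ) ≤ (q : ℤ) ^ n := le_self_pow₀ (by linarith) (by omega)
  have hfact : (Y - t) * (Y + t) = N' * (q : ℤ) ^ n := by linear_combination heq
  have hYt : t < Y := by nlinarith
  have hdvd : (q : ℤ) ^ n ∣ (Y - t) * (Y + t) := hfact ▸ Dvd.intro_left N' rfl
  -- q^n ∣ Y + t
  have hmain : (q : ℤ) ^ n ∣ Y + t := by
    by_cases hc' : (q : ℤ) ∣ (Y - t)
    · exfalso
      have hc : ¬ (q : ℤ) ∣ (Y + t) := by
        intro hc
        have h2t : (q : ℤ) ∣ 2 * t := by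
          have h0 := dvd_sub hc hc'
          have h2 : Y + t - (Y - t) = 2 * t := by ring
          rwa [h2] at h0
        rcases hprime.dvd_mul.mp h2t with h | h
        · exact absurd (Int.le_of_dvd (by norm_num) h) (by linarith)
        · exact hqt h
      have hdvd' : (q : ℤ) ^ n ∣ (Y - t) :=
        hprime.pow_dvd_of_dvd_mul_right n hc hdvd
      have h1 : (q : ℤ) ^ n ≤ Y - t := Int.le_of_dvd (by linarith) hdvd'
      nlinarith
    · exact hprime.pow_dvd_of_dvd_mul_left n hc' hdvd
  obtain ⟨k, hk⟩ := hmain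
  have hkpos : 1 ≤ k := by
    have : 0 < (q : ℤ) ^ n * k := by rw [← hk]; linarith
    nlinarith
  have hNk : (Y - t) * k = N' := by
    have h1 : ((Y - t) * k) * (q : ℤ) ^ n = N' * (q : ℤ) ^ n := by
      rw [← hfact, hk]; ring
    exact mul_right_cancel₀ (by positivity) h1
  have hYtN : Y - t ≤ N' := by nlinarith
  -- 2t = q^n * k - (Y - t)
  have h2t : 2 * t = (q : ℤ) ^ n * k - (Y - t) := by linarith [hk]
  have hn1 : n = 1 := by
    by_contra hne
    have hn2 : 2 ≤ n := by omega
    have hq2n : (q : ℤ) ^ 2 ≤ (q : ℤ) ^ n := pow_le_pow_right₀ (by linarith) hn2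
    have : (q : ℤ) ^ 2 * 1 ≤ (q : ℤ) ^ n * k := by
      apply mul_le_mul hq2n hkpos (by norm_num) (le_of_lt hqn_pos)
    nlinarith
  subst hn1
  have hk1 : k = 1 := by
    by_contra hke
    have hk2 : 2 ≤ k := by omega
    have : 2 * (q : ℤ) ≤ (q : ℤ) ^ 1 * k := by
      rw [pow_one]; nlinarith
    nlinarith
  subst hk1
  rw [pow_one] at hk
  refine ⟨rfl, by linarith, by linarith [hNk]⟩
end

section
/- Let q be an odd prime and suppose Y^2 = t^2 + M·q^m + N·q^n with Y, t, N ≥ 1, M ≠ 0, |M|, N, t^2 ≤ q−1, m ≥ 3 and m < n. Then n ≥ 2m − 1. -/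
set_option maxHeartbeats 1000000


/-- First gap estimate: if `Y² = t² + M·qᵐ + N·qⁿ` with `q` an odd prime,
`M ≠ 0`, the size constraints, `m ≥ 3` and `m < n`, then `n ≥ 2m − 1`. -/
theorem gap_estimate_first (q : ℕ) (hq : Nat.Prime q) (hodd : Odd q)
    (Y t M N : ℤ) (m n : ℕ)
    (hY : 1 ≤ Y) (ht : 1 ≤ t) (hN : 1 ≤ N) (hM0 : M ≠ 0)
    (hM : |M| ≤ (q : ℤ) - 1) (hNq : N ≤ (q : ℤ) - 1) (ht2 : t ^ 2 ≤ (q : ℤ) - 1)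
    (hm : 3 ≤ m) (hmn : m < n)
    (heq : Y ^ 2 = t ^ 2 + M * (q : ℤ) ^ m + N * (q : ℤ) ^ n) :
    2 * m - 1 ≤ n := by
  by_contra hcon
  push_neg at hcon
  have hn2m : n ≤ 2 * m - 2 := by omega
  set Q : ℤ := (q : ℤ) with hQ
  have hqp : Prime Q := Nat.prime_iff_prime_int.mp hq
  have hq3 : (3 : ℤ) ≤ Q := by
    have := hq.two_le
    rcases hodd with ⟨k, hk⟩
    omega
  -- basic bounds
  have hM' : -(Q - 1) ≤ M ∧ M ≤ Q - 1 := abs_le.mp hM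
  -- a = Q^(m-1)
  set a : ℤ := Q ^ (m - 1) with ha
  have hQpos : (0:ℤ) < Q := by linarith
  have haq2 : Q ^ 2 ≤ a := by
    rw [ha]
    exact pow_le_pow_right₀ (by linarith) (by omega)
  have hapos : (0:ℤ) < a := lt_of_lt_of_le (by nlinarith) haq2
  have hqm : Q ^ m = Q * a := by
    rw [ha, ← pow_succ']
    congr 1
    omega
  have hqn_le : Q ^ n ≤ a ^ 2 := by
    rw [ha, ← pow_mul]
    exact pow_le_pow_right₀ (by linarith) (by omega)
  have hqn_ge : Q * Q ^ m ≤ Q ^ n := by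
    rw [← pow_succ']
    exact pow_le_pow_right₀ (by linarith) (by omega)
  have hqn_pos : (0:ℤ) < Q ^ n := pow_pos hQpos n
  have hqm_pos : (0:ℤ) < Q ^ m := pow_pos hQpos m
  -- Y > t
  have hYt : t < Y := by
    have h1 : Y ^ 2 - t ^ 2 = M * Q ^ m + N * Q ^ n := by linarith
    have hMlow : -(Q - 1) * Q ^ m ≤ M * Q ^ m :=
      mul_le_mul_of_nonneg_right hM'.1 hqm_pos.le
    have hNlow : Q ^ n ≤ N * Q ^ n := le_mul_of_one_le_left hqn_pos.le hN
    have hkey : Q * Q ^ m - (Q - 1) * Q ^ m = Q ^ m := by ring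
    have h2 : (0:ℤ) < M * Q ^ m + N * Q ^ n := by linarith
    by_contra h
    push_neg at h
    have : Y ^ 2 ≤ t ^ 2 := pow_le_pow_left₀ (by linarith) h 2
    linarith
  -- q ∤ t
  have hqt : ¬ Q ∣ t := by
    intro hdvd
    have : Q ≤ t := Int.le_of_dvd (by linarith) hdvd
    nlinarith
  -- q^m ∣ (Y - t) * (Y + t)
  have hdvdprod : Q ^ m ∣ (Y - t) * (Y + t) := by
    have hpow : Q ^ n = Q ^ m * Q ^ (n - m) := by
      rw [← pow_add]; congr 1; omega
    refine ⟨M + N * Q ^ (n - m), ?_⟩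
    have : (Y - t) * (Y + t) = M * Q ^ m + N * Q ^ n := by ring_nf; linarith
    rw [this, hpow]; ring
  -- not both divisible by q
  have hnotboth : ¬ (Q ∣ (Y - t) ∧ Q ∣ (Y + t)) := by
    rintro ⟨h1, h2⟩
    have h3 : Q ∣ 2 * t := by
      have := dvd_sub h2 h1
      simpa [show Y + t - (Y - t) = 2 * t by ring] using this
    rcases (hqp.dvd_mul.mp h3) with h | h
    · have : Q ≤ 2 := Int.le_of_dvd (by norm_num) h
      linarith
    · exact hqt h
  -- key inequality: Y^2 ≤ t^2 + (Q-1)*Q*a + (Q-1)*a^2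
  have hupper : Y ^ 2 ≤ t ^ 2 + (Q - 1) * (Q * a) + (Q - 1) * a ^ 2 := by
    have hMle : M * Q ^ m ≤ (Q - 1) * Q ^ m := by nlinarith [hM'.2]
    have hNle : N * Q ^ n ≤ (Q - 1) * a ^ 2 := by nlinarith
    rw [heq, hqm] at *
    linarith
  -- split
  rcases Classical.em (Q ∣ (Y - t)) with hc | hc
  · -- then ¬ Q ∣ Y + t, so Q^m ∣ Y - t
    have hnc : ¬ Q ∣ (Y + t) := fun h => hnotboth ⟨hc, h⟩
    have hd : Q ^ m ∣ (Y - t) := by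
      rw [mul_comm] at hdvdprod
      exact hqp.pow_dvd_of_dvd_mul_left m hnc hdvdprod
    have hge : Q ^ m ≤ Y - t := Int.le_of_dvd (by linarith) hd
    rw [hqm] at hge
    have hQa : (0:ℤ) < Q * a := mul_pos hQpos hapos
    have h1 : (t + Q * a) ^ 2 ≤ Y ^ 2 := pow_le_pow_left₀ (by linarith) (by linarith) 2
    have hQ2a : Q ^ 2 * a ≤ a * a := mul_le_mul_of_nonneg_right haq2 hapos.le
    nlinarith [sq_nonneg a, mul_pos hQa hapos, mul_nonneg (sq_nonneg a) (by linarith : (0:ℤ) ≤ Q - 1)]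
  · have hd : Q ^ m ∣ (Y + t) := hqp.pow_dvd_of_dvd_mul_left m hc hdvdprod
    have hge : Q ^ m ≤ Y + t := Int.le_of_dvd (by linarith) hd
    rw [hqm] at hge
    -- 2t ≤ Q
    have h2t : 2 * t ≤ Q := by nlinarith
    have hQa : (0:ℤ) < Q * a := mul_pos hQpos hapos
    have hQ2a : Q ^ 2 * a ≤ a * a := mul_le_mul_of_nonneg_right haq2 hapos.le
    have htQa : Q * a ≥ 27 := by nlinarith
    have h1 : (Q * a - t) ^ 2 ≤ Y ^ 2 := pow_le_pow_left₀ (by nlinarith) (by linarith) 2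
    have h2tQa : 2 * t * (Q * a) ≤ Q * (Q * a) := by
      have := mul_le_mul_of_nonneg_right h2t hQa.le
      linarith
    nlinarith [sq_nonneg a, mul_pos hQa hapos, mul_nonneg (sq_nonneg a) (by linarith : (0:ℤ) ≤ Q - 1)]
end

section
/- For nonnegative integers n_1, n_2 and k ≤ n_1, the rational number C(n_1 + 1/2, k)·4^k is an integer, where C(n_1 + 1/2, k) denotes the generalized binomial coefficient (n_1 + 1/2)(n_1 − 1/2)···(n_1 + 1/2 − k + 1)/k!. Consequently, 4^{n_1}·P_{n_1,n_2}(x) has integer coefficients, where P_{n_1,n_2}(x) = Σ_{k=0}^{n_1} C(n_2 + 1/2, k)·C(n_1 + n_2 − k, n_2)·x^k. -/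
/-- Generalized binomial coefficient `C(α, k) = α(α−1)⋯(α−k+1)/k!` for rational `α`. -/
def gchoose (α : ℚ) (k : ℕ) : ℚ :=
  (∏ i ∈ Finset.range k, (α - i)) / (Nat.factorial k)

/-!
The numbers `C(α, k)·4^k` with `α ∈ ℤ + 1/2` satisfy Pascal's rule in `α`, so integrality
propagates from `α = -1/2` upwards; there `C(-1/2, k)·4^k = (-1)^k·C(2k, k)`. The coefficients
of `4^{n₁}·P_{n₁,n₂}` are such numbers for `α = n₂ + 1/2`, multiplied by `4^{n₁-k}` and an
ordinary binomial coefficient.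
-/

lemma gchoose_zero (α : ℚ) : gchoose α 0 = 1 := by simp [gchoose]

lemma gchoose_succ (α : ℚ) (k : ℕ) :
    gchoose α (k + 1) = gchoose α k * (α - k) / (k + 1) := by
  have hk : (k.factorial : ℚ) ≠ 0 := by exact_mod_cast k.factorial_ne_zero
  unfold gchoose
  rw [Finset.prod_range_succ, Nat.factorial_succ]
  push_cast
  field_simp

lemma gchoose_add_one_succ (α : ℚ) (k : ℕ) :
    gchoose (α + 1) (k + 1) = gchoose α (k + 1) + gchoose α k := by
  have hk : (k.factorial : ℚ) ≠ 0 := by exact_mod_cast k.factorial_ne_zero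
  have hshift : ∀ i : ℕ, α + 1 - ((i + 1 : ℕ) : ℚ) = α - i := fun i => by push_cast; ring
  unfold gchoose
  rw [Finset.prod_range_succ', Finset.prod_range_succ, Nat.factorial_succ]
  simp only [hshift]
  push_cast
  field_simp
  ring

lemma gchoose_neg_half_mul_four_pow (k : ℕ) :
    gchoose (-1 / 2) k * 4 ^ k = (-1) ^ k * k.centralBinom := by
  induction k with
  | zero => simp [gchoose_zero]
  | succ k ih =>
    have hrec : ((k + 1 : ℕ) : ℚ) * (k + 1).centralBinom = 2 * (2 * k + 1) * k.centralBinom := by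
      exact_mod_cast Nat.succ_mul_centralBinom_succ k
    push_cast at hrec
    rw [gchoose_succ, div_mul_eq_mul_div, div_eq_iff (by positivity)]
    linear_combination 4 * (-1 / 2 - k) * ih + (-1 : ℚ) ^ k * hrec

lemma exists_int_gchoose_neg_half_add_mul_four_pow (m k : ℕ) :
    ∃ z : ℤ, gchoose (-1 / 2 + m) k * 4 ^ k = z := by
  induction m generalizing k with
  | zero => exact ⟨(-1) ^ k * k.centralBinom, by simpa using gchoose_neg_half_mul_four_pow k⟩
  | succ m ih =>
    cases k with
    | zero => exact ⟨1, by simp [gchoose_zero]⟩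
    | succ k =>
      obtain ⟨z₁, hz₁⟩ := ih (k + 1)
      obtain ⟨z₀, hz₀⟩ := ih k
      refine ⟨z₁ + 4 * z₀, ?_⟩
      rw [Nat.cast_succ, ← add_assoc, gchoose_add_one_succ, add_mul, hz₁, pow_succ]
      push_cast
      linear_combination 4 * hz₀

lemma exists_int_gchoose_add_half_mul_four_pow (n k : ℕ) :
    ∃ z : ℤ, gchoose (n + 1 / 2) k * 4 ^ k = z := by
  have h : (n : ℚ) + 1 / 2 = -1 / 2 + (n + 1 : ℕ) := by push_cast; ring
  rw [h]
  exact exists_int_gchoose_neg_half_add_mul_four_pow (n + 1) k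

/-- `C(n₁ + 1/2, k)·4^k` is an integer for `k ≤ n₁`; consequently the coefficients of
`4^{n₁}·P_{n₁,n₂}(x)`, namely `4^{n₁}·C(n₂ + 1/2, k)·C(n₁ + n₂ − k, n₂)`, are integers. -/
theorem gchoose_half_integrality (n1 n2 : ℕ) :
    (∀ k : ℕ, k ≤ n1 → ∃ z : ℤ, gchoose ((n1 : ℚ) + 1 / 2) k * 4 ^ k = (z : ℚ)) ∧
    (∀ k : ℕ, k ≤ n1 → ∃ z : ℤ,
      (4 : ℚ) ^ n1 * (gchoose ((n2 : ℚ) + 1 / 2) k * (Nat.choose (n1 + n2 - k) n2 : ℚ))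
        = (z : ℚ)) := by
  refine ⟨fun k _ => exists_int_gchoose_add_half_mul_four_pow n1 k, fun k hk => ?_⟩
  obtain ⟨z, hz⟩ := exists_int_gchoose_add_half_mul_four_pow n2 k
  refine ⟨z * 4 ^ (n1 - k) * ((n1 + n2 - k).choose n2 : ℤ), ?_⟩
  rw [show (4 : ℚ) ^ n1 = 4 ^ k * 4 ^ (n1 - k) by rw [← pow_add, Nat.add_sub_cancel' hk]]
  push_cast
  linear_combination (4 : ℚ) ^ (n1 - k) * ((n1 + n2 - k).choose n2 : ℚ) * hz
end

section
/- Let n_1 ≥ n_2 ≥ 0 be integers with n_1 > n_2, and let Q_{n_1,n_2}(x) = Σ_{k=0}^{n_2} C(n_1 − 1/2, k)·C(n_1 + n_2 − k, n_1)·x^k. Then for every real x with |x| ≥ 16, |Q_{n_1,n_2}(x)| ≤ 2^{n_1+n_2−1}·(1 + |x|/2)^{n_2}. -/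
/-!
Each factor `n - t - i` of `C(n - t, k)` lies in `[0, n - i]`, so `|C(n₁ - 1/2, k)| ≤ C(n₁, k)`.
The identity `C(n₁, k) C(n₁ + n₂ - k, n₁) = C(n₂, k) C(n₁ + n₂ - k, n₂)` then trades `C(n₁, k)`
for `C(n₂, k)`, and with `C(m, j) ≤ 2^(m-1)` the `k`-th term of `Q` is at most
`2^(n₁+n₂-1) C(n₂, k) (|x|/2)^k`; summing over `k` gives `2^(n₁+n₂-1) (1 + |x|/2)^n₂`.
-/

/-- Generalized binomial coefficient `C(α, k) = α(α−1)⋯(α−k+1)/k!` for real `α`. -/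
noncomputable def gchooseR (α : ℝ) (k : ℕ) : ℝ :=
  (∏ i ∈ Finset.range k, (α - i)) / (Nat.factorial k)

open Finset

theorem gchooseR_natCast (n k : ℕ) : gchooseR n k = n.choose k := by
  rw [gchooseR, Nat.cast_choose_eq_descPochhammer_div, descPochhammer_eval_eq_prod_range]

theorem abs_gchooseR_natCast_sub_le {n k : ℕ} (hk : k ≤ n) {t : ℝ} (ht₀ : 0 ≤ t) (ht₁ : t ≤ 1) :
    |gchooseR (n - t) k| ≤ n.choose k := by
  rw [← gchooseR_natCast, gchooseR, gchooseR, abs_div, Nat.abs_cast, abs_prod]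
  gcongr with i hi
  have hin : (i : ℝ) + 1 ≤ n := by exact_mod_cast (mem_range.mp hi).trans_le hk
  rw [abs_of_nonneg (by linarith)]
  linarith

theorem Nat.choose_mul_choose_add_sub_eq {a b k : ℕ} (ha : k ≤ a) (hb : k ≤ b) :
    a.choose k * (a + b - k).choose a = b.choose k * (a + b - k).choose b := by
  have hsymm : (a + b - k - k).choose (a - k) = (a + b - k - k).choose (b - k) :=
    Nat.choose_symm_of_eq_add (by omega)
  rw [mul_comm, Nat.choose_mul ha, hsymm, ← Nat.choose_mul hb, mul_comm]

theorem Nat.choose_le_two_pow_sub_one : ∀ m j : ℕ, m.choose j ≤ 2 ^ (m - 1)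
  | 0, j => (Nat.choose_le_two_pow 0 j).trans_eq rfl
  | m + 1, j => Nat.choose_succ_le_two_pow m j

theorem abs_gchooseR_mul_choose_mul_pow_le {n₁ n₂ k : ℕ} (h : n₂ ≤ n₁) (hk : k ≤ n₂) (x : ℝ) :
    |gchooseR ((n₁ : ℝ) - 1 / 2) k * ((n₁ + n₂ - k).choose n₁ : ℝ) * x ^ k| ≤
      2 ^ (n₁ + n₂ - 1) * (n₂.choose k : ℝ) * (|x| / 2) ^ k := by
  have hgchoose := abs_gchooseR_natCast_sub_le (hk.trans h) (t := 1 / 2) (by norm_num) (by norm_num)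
  have hswap : (n₁.choose k : ℝ) * ((n₁ + n₂ - k).choose n₁ : ℝ) =
      n₂.choose k * ((n₁ + n₂ - k).choose n₂ : ℝ) := by
    exact_mod_cast Nat.choose_mul_choose_add_sub_eq (hk.trans h) hk
  have hchoose : ((n₁ + n₂ - k).choose n₂ : ℝ) ≤ 2 ^ (n₁ + n₂ - k - 1) := by
    exact_mod_cast Nat.choose_le_two_pow_sub_one _ n₂
  have hpow : (2 : ℝ) ^ (n₁ + n₂ - k - 1) * 2 ^ k = 2 ^ (n₁ + n₂ - 1) := by
    rw [← pow_add]; congr 1; omega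
  calc |gchooseR ((n₁ : ℝ) - 1 / 2) k * ((n₁ + n₂ - k).choose n₁ : ℝ) * x ^ k|
      = |gchooseR ((n₁ : ℝ) - 1 / 2) k| * ((n₁ + n₂ - k).choose n₁ : ℝ) * |x| ^ k := by
        rw [abs_mul, abs_mul, abs_pow, Nat.abs_cast]
    _ ≤ n₁.choose k * ((n₁ + n₂ - k).choose n₁ : ℝ) * |x| ^ k := by gcongr
    _ = n₂.choose k * ((n₁ + n₂ - k).choose n₂ : ℝ) * |x| ^ k := by rw [hswap]
    _ ≤ n₂.choose k * 2 ^ (n₁ + n₂ - k - 1) * |x| ^ k := by gcongr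
    _ = 2 ^ (n₁ + n₂ - 1) * (n₂.choose k : ℝ) * (|x| / 2) ^ k := by
        rw [← hpow, div_pow]; field_simp

theorem Q_bound_general (n1 n2 : ℕ) (h : n2 < n1) (x : ℝ) :
    |∑ k ∈ Finset.range (n2 + 1),
        gchooseR ((n1 : ℝ) - 1 / 2) k * (Nat.choose (n1 + n2 - k) n1 : ℝ) * x ^ k| ≤
      2 ^ (n1 + n2 - 1) * (1 + |x| / 2) ^ n2 := by
  calc _ ≤ ∑ k ∈ range (n2 + 1),
          |gchooseR ((n1 : ℝ) - 1 / 2) k * (Nat.choose (n1 + n2 - k) n1 : ℝ) * x ^ k| :=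
        abs_sum_le_sum_abs _ _
    _ ≤ ∑ k ∈ range (n2 + 1), 2 ^ (n1 + n2 - 1) * (n2.choose k : ℝ) * (|x| / 2) ^ k :=
        sum_le_sum fun k hk => abs_gchooseR_mul_choose_mul_pow_le h.le (Nat.lt_succ_iff.mp (mem_range.mp hk)) x
    _ = 2 ^ (n1 + n2 - 1) * (1 + |x| / 2) ^ n2 := by
        rw [add_comm (1 : ℝ), add_pow, mul_sum]
        refine sum_congr rfl fun k _ => ?_
        ring

/-- Bound for the Padé denominator: if `n₁ > n₂ ≥ 0` and `|x| ≥ 16`, then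
`|Q_{n₁,n₂}(x)| ≤ 2^{n₁+n₂−1}·(1 + |x|/2)^{n₂}`. -/
theorem Q_bound (n1 n2 : ℕ) (h : n2 < n1) (x : ℝ) (hx : 16 ≤ |x|) :
    |∑ k ∈ Finset.range (n2 + 1),
        gchooseR ((n1 : ℝ) - 1 / 2) k * (Nat.choose (n1 + n2 - k) n1 : ℝ) * x ^ k| ≤
      2 ^ (n1 + n2 - 1) * (1 + |x| / 2) ^ n2 :=
  Q_bound_general n1 n2 h x
end
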